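/- arXiv:2404.12117 — 2 statements merged into one kernel-verified Lean document; each statement's English description precedes it below -/
import Mathlib

section
/- Let p > 3 be prime with |∑_{1 ≤ n < p} λ(n)λ(p−n)| = p − 1. Then S_λ(2ξ) = −S_λ(ξ) for all ξ ∈ ℤ/pℤ, where S_λ(ξ) := ∑_{1 ≤ n < p} λ(n)·exp(2πi·nξ/p). -/
/-!
The hypothesis forces each of the `p - 1` signs `λ(n) λ(p - n)` to take the same value `ε`.
Then `λ(2n mod p) = -λ(n)` for `0 < n < p`: for `2n < p` this is complete multiplicativity,
and for `2n > p` the reflection `p - (2n - p) = 2(p - n)` together with the constancy of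
`λ(m) λ(p - m)` gives it. Since `n ↦ 2n mod p` permutes `1, …, p - 1` and `e(nξ/p)` only
depends on `n mod p`, reindexing `S_λ(2ξ)` by `m = 2n mod p` yields `-S_λ(ξ)`.
-/

open Finset

def lam (n : ℕ) : ℤ := (-1) ^ (ArithmeticFunction.cardFactors n)

noncomputable def Slam (p : ℕ) (ξ : ℕ) : ℂ :=
  ∑ n ∈ Finset.Ico 1 p, (lam n : ℂ) * Complex.exp (2 * Real.pi * Complex.I * (n * ξ) / p)

theorem Finset.exists_eq_of_abs_sum_eq_card {ι R : Type*} [Ring R] [LinearOrder R]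
    [IsOrderedRing R] {s : Finset ι} {f : ι → R} (hf : ∀ i ∈ s, |f i| = 1)
    (h : |∑ i ∈ s, f i| = #s) : ∃ ε, ∀ i ∈ s, f i = ε := by
  rcases abs_eq (Nat.cast_nonneg _) |>.mp h with hsum | hsum
  · refine ⟨1, (sum_eq_sum_iff_of_le fun i hi => (abs_le.mp (hf i hi).le).2).mp ?_⟩
    simp [hsum]
  · have hle (i) (hi : i ∈ s) : -1 ≤ f i := (abs_le.mp (hf i hi).le).1
    refine ⟨-1, fun i hi => ((sum_eq_sum_iff_of_le hle).mp ?_ i hi).symm⟩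
    simp [hsum]

theorem Finset.sum_Ico_mul_mod {M : Type*} [AddCommMonoid M] {p a : ℕ} (ha : a.Coprime p)
    (g : ℕ → M) : ∑ n ∈ Ico 1 p, g (a * n % p) = ∑ n ∈ Ico 1 p, g n := by
  classical
  have hmaps : ∀ n ∈ Ico 1 p, a * n % p ∈ Ico 1 p := by
    intro n hn
    obtain ⟨hn1, hnp⟩ := mem_Ico.mp hn
    refine mem_Ico.mpr ⟨Nat.pos_of_ne_zero fun h0 => ?_, Nat.mod_lt _ (by omega)⟩
    have hdvd : p ∣ n := ha.symm.dvd_of_dvd_mul_left (Nat.dvd_of_mod_eq_zero h0)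
    exact absurd (Nat.eq_zero_of_dvd_of_lt hdvd hnp) (by omega)
  have hinj : Set.InjOn (fun n => a * n % p) (Ico 1 p) := by
    intro n hn m hm hnm
    exact Nat.ModEq.eq_of_lt_of_lt (Nat.ModEq.cancel_left_of_coprime ha.symm hnm)
      (mem_Ico.mp hn).2 (mem_Ico.mp hm).2
  have himage : (Ico 1 p).image (fun n => a * n % p) = Ico 1 p :=
    eq_of_subset_of_card_le (image_subset_iff.mpr hmaps) (card_image_of_injOn hinj).ge
  rw [← sum_image hinj, himage]

open Complex Real in
theorem Complex.exp_two_pi_I_mul_div_eq_of_modEq {p a b : ℕ} (h : a ≡ b [MOD p]) :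
    exp (2 * π * I * a / p) = exp (2 * π * I * b / p) := by
  have hroot : exp (2 * π * I / p) ^ p = 1 := by
    rcases eq_or_ne p 0 with rfl | hp
    · exact pow_zero _
    · exact (isPrimitiveRoot_exp p hp).pow_eq_one
  have hpow (k : ℕ) : exp (2 * π * I * k / p) = exp (2 * π * I / p) ^ k := by
    rw [← exp_nat_mul]; ring_nf
  rw [hpow, hpow, pow_eq_pow_of_modEq h hroot]

theorem abs_lam (n : ℕ) : |lam n| = 1 := abs_neg_one_pow _

theorem lam_ne_zero (n : ℕ) : lam n ≠ 0 := pow_ne_zero _ (by norm_num)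

theorem lam_two_mul {n : ℕ} (hn : n ≠ 0) : lam (2 * n) = -lam n := by
  rw [lam, lam, ArithmeticFunction.cardFactors_mul two_ne_zero hn,
    ArithmeticFunction.cardFactors_apply_prime Nat.prime_two, pow_add, pow_one, neg_one_mul]

theorem lam_two_mul_mod {p : ℕ} (hp : Odd p) {ε : ℤ}
    (hε : ∀ n ∈ Ico 1 p, lam n * lam (p - n) = ε) {n : ℕ} (hn : n ∈ Ico 1 p) :
    lam (2 * n % p) = -lam n := by
  obtain ⟨hn1, hnp⟩ := mem_Ico.mp hn
  obtain ⟨k, rfl⟩ := hp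
  rcases lt_or_ge (2 * n) (2 * k + 1) with hlt | hge
  · rw [Nat.mod_eq_of_lt hlt, lam_two_mul (by omega)]
  have hmod : 2 * n % (2 * k + 1) = 2 * n - (2 * k + 1) := by
    rw [Nat.mod_eq_sub_mod hge, Nat.mod_eq_of_lt (by omega)]
  have hreflect : 2 * k + 1 - (2 * n - (2 * k + 1)) = 2 * (2 * k + 1 - n) := by omega
  have hpair := hε (2 * n - (2 * k + 1)) (mem_Ico.mpr ⟨by omega, by omega⟩)
  rw [hreflect, lam_two_mul (by omega), ← hε n hn] at hpair
  rw [hmod]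
  exact mul_right_cancel₀ (lam_ne_zero (2 * k + 1 - n)) (by linear_combination -hpair)

open Complex Real in
theorem stmt_8 (p : ℕ) (hp : p.Prime) (hp3 : 3 < p)
    (h : |∑ n ∈ Finset.Ico 1 p, lam n * lam (p - n)| = (p : ℤ) - 1) :
    ∀ ξ : ℕ, Slam p (2 * ξ) = -Slam p ξ := by
  have hodd : Odd p := hp.odd_of_ne_two (by omega)
  obtain ⟨ε, hε⟩ : ∃ ε : ℤ, ∀ n ∈ Ico 1 p, lam n * lam (p - n) = ε :=
    exists_eq_of_abs_sum_eq_card (fun n _ => by rw [abs_mul, abs_lam, abs_lam, one_mul])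
      (by rw [h, Nat.card_Ico, Nat.cast_sub (by omega), Nat.cast_one])
  intro ξ
  calc Slam p (2 * ξ)
      = ∑ n ∈ Ico 1 p,
          -((lam (2 * n % p) : ℂ) * exp (2 * π * I * ((2 * n % p : ℕ) * ξ) / p)) := by
        refine sum_congr rfl fun n hn => ?_
        have hmod : n * (2 * ξ) ≡ 2 * n % p * ξ [MOD p] := by
          rw [← mul_assoc, mul_comm n 2]; exact (Nat.mod_modEq _ _).symm.mul_right _
        rw [lam_two_mul_mod hodd hε hn, Int.cast_neg, neg_mul, neg_neg, ← Nat.cast_mul,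
          ← Nat.cast_mul, exp_two_pi_I_mul_div_eq_of_modEq hmod]
    _ = -Slam p ξ := by
        rw [sum_neg_distrib, sum_Ico_mul_mod (Nat.coprime_two_left.mpr hodd)
          (fun m => (lam m : ℂ) * exp (2 * π * I * (m * ξ) / p))]
        rfl
end

section
/- Let p, q be primes with 3 < q < p such that |∑_{1 ≤ n < p} λ(n)λ(p−n)| = p − 1. Let 1 ≤ r ≤ q−1 and suppose (m,j) satisfies 1 ≤ m < p, 0 ≤ j < q, pq/(r+1) < m + jp < pq/r, and q | (m + jp). Set m' = ⌈rm/p⌉·p − rm and j' = q − jr − ⌈rm/p⌉. Then λ(m + jp) = λ(r)·λ(p−1)·λ(m' + j'p). -/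
open Finset

lemma lam_mul (a b : ℕ) (ha : a ≠ 0) (hb : b ≠ 0) : lam (a * b) = lam a * lam b := by
  unfold lam
  rw [ArithmeticFunction.cardFactors_mul ha hb, pow_add]

lemma lam_pm (n : ℕ) : lam n = 1 ∨ lam n = -1 := by
  unfold lam
  rcases Nat.even_or_odd (ArithmeticFunction.cardFactors n) with he | ho
  · left; exact he.neg_one_pow
  · right; exact ho.neg_one_pow

lemma lam_sq (n : ℕ) : lam n * lam n = 1 := by
  rcases lam_pm n with h | h <;> rw [h] <;> norm_num

lemma lam_one : lam 1 = 1 := by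
  unfold lam; simp

lemma key (p : ℕ) (hp : p.Prime)
    (h : |∑ n ∈ Finset.Ico 1 p, lam n * lam (p - n)| = (p : ℤ) - 1) :
    ∀ n, 1 ≤ n → n < p → lam n * lam (p - n) = lam (p - 1) := by
  have hp2 : 2 ≤ p := hp.two_le
  have hcard : ((Finset.Ico 1 p).card : ℤ) = (p : ℤ) - 1 := by
    rw [Nat.card_Ico]
    have : (1 : ℕ) ≤ p := by omega
    push_cast [Nat.cast_sub this]
    ring
  have habs := abs_eq (by push_cast; omega : (0:ℤ) ≤ (p:ℤ) - 1) |>.mp h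
  have hone : (1 : ℕ) ∈ Finset.Ico 1 p := by simp; omega
  rcases habs with hs | hs
  · -- all terms equal 1
    have hz : ∑ n ∈ Finset.Ico 1 p, (1 - lam n * lam (p - n)) = 0 := by
      rw [Finset.sum_sub_distrib, hs, Finset.sum_const, nsmul_eq_mul, mul_one, hcard]
      ring
    have hall := (Finset.sum_eq_zero_iff_of_nonneg ?_).mp hz
    · intro n hn1 hnp
      have h1 := hall 1 hone
      have hn := hall n (by simp; omega)
      have e1 : lam 1 * lam (p - 1) = 1 := by linarith
      rw [lam_one, one_mul] at e1
      have en : lam n * lam (p - n) = 1 := by linarith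
      rw [en, e1]
    · intro i _
      rcases lam_pm i with h1 | h1 <;> rcases lam_pm (p - i) with h2 | h2 <;>
        rw [h1, h2] <;> norm_num
  · -- all terms equal -1
    have hz : ∑ n ∈ Finset.Ico 1 p, (1 + lam n * lam (p - n)) = 0 := by
      rw [Finset.sum_add_distrib, hs, Finset.sum_const, nsmul_eq_mul, mul_one, hcard]
      ring
    have hall := (Finset.sum_eq_zero_iff_of_nonneg ?_).mp hz
    · intro n hn1 hnp
      have h1 := hall 1 hone
      have hn := hall n (by simp; omega)
      have e1 : lam 1 * lam (p - 1) = -1 := by linarith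
      rw [lam_one, one_mul] at e1
      have en : lam n * lam (p - n) = -1 := by linarith
      rw [en, e1]
    · intro i _
      rcases lam_pm i with h1 | h1 <;> rcases lam_pm (p - i) with h2 | h2 <;>
        rw [h1, h2] <;> norm_num

theorem stmt_15 (p q : ℕ) (hp : p.Prime) (hq : q.Prime) (hq3 : 3 < q) (hqp : q < p)
    (h : |∑ n ∈ Finset.Ico 1 p, lam n * lam (p - n)| = (p : ℤ) - 1)
    (r m j : ℕ) (hr1 : 1 ≤ r) (hr2 : r ≤ q - 1)
    (hm1 : 1 ≤ m) (hm2 : m < p) (hj : j < q)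
    (hlow : (p * q : ℚ) / (r + 1) < (m : ℚ) + j * p)
    (hhigh : ((m : ℚ) + j * p) < (p * q : ℚ) / r)
    (hdvd : q ∣ (m + j * p)) :
    lam (m + j * p) = lam r * lam (p - 1) * lam (p * q - r * (m + j * p)) := by
  obtain ⟨k, hk⟩ := hdvd
  have hr0 : (0 : ℚ) < r := by exact_mod_cast hr1
  have hr10 : (0 : ℚ) < (r : ℚ) + 1 := by positivity
  -- r * (m + j*p) < p * q
  have hA : r * (m + j * p) < p * q := by
    have := (lt_div_iff₀ hr0).mp hhigh
    have h2 : ((r * (m + j * p) : ℕ) : ℚ) < ((p * q : ℕ) : ℚ) := by push_cast; linarith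
    exact_mod_cast h2
  -- p * q < (r+1) * (m + j*p)
  have hB : p * q < (r + 1) * (m + j * p) := by
    have := (div_lt_iff₀ hr10).mp hlow
    have h2 : ((p * q : ℕ) : ℚ) < (((r + 1) * (m + j * p) : ℕ) : ℚ) := by push_cast; linarith
    exact_mod_cast h2
  have hq0 : 0 < q := hq.pos
  have hk1 : 1 ≤ k := by
    rcases Nat.eq_zero_or_pos k with h0 | h0
    · rw [h0, mul_zero] at hk; omega
    · exact h0
  -- rk < p
  have hrk : r * k < p := by
    have : r * k * q < p * q := by
      calc r * k * q = r * (q * k) := by ring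
        _ = r * (m + j * p) := by rw [← hk]
        _ < p * q := hA
    exact Nat.lt_of_mul_lt_mul_right this
  have hrk1 : 1 ≤ r * k := Nat.one_le_iff_ne_zero.mpr (by positivity)
  have hfac : p * q - r * (m + j * p) = q * (p - r * k) := by
    rw [hk]
    have h1 : r * (q * k) = q * (r * k) := by ring
    rw [h1, Nat.mul_sub, Nat.mul_comm p q]
  have hkey := key p hp h (r * k) hrk1 hrk
  have hlamrk : lam (r * k) = lam r * lam k := lam_mul r k (by omega) (by omega)
  rw [hlamrk] at hkey
  have hN : lam (m + j * p) = lam q * lam k := by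
    rw [hk]; exact lam_mul q k (by omega) (by omega)
  have hM : lam (p * q - r * (m + j * p)) = lam q * lam (p - r * k) := by
    rw [hfac]; exact lam_mul q (p - r * k) (by omega) (by omega)
  rw [hN, hM]
  have hA2 := lam_sq r
  have hC2 := lam_sq (p - r * k)
  linear_combination (lam r * lam (p - r * k) * lam q) * hkey -
    (lam k * lam q) * hA2 - (lam k * lam q * lam r * lam r) * hC2
end
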